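/- arXiv:1211.2085 — 2 statements merged into one kernel-verified Lean document; each statement's English description precedes it below -/
import Mathlib

section
/- Let (Y_t)_{t≥1} be a sequence of centered Gaussian real random variables with Var(Y_t) ≤ q(ε)σ² for all t, where σ² > 0 and q(ε) → 0 as ε → 0, and let τ = min{t ≥ 1 : |Y_t| ≥ 1}. Then liminf_{ε→0} q(ε) log E[τ] ≥ 1/(2σ²). -/
/-!
By a Chernoff bound, each `Y_t` leaves `(-1, 1)` with probability at most `p = 2 exp (-1 / (2V))`,
where `V = q(ε) σ²`. A union bound over the first `n ≈ 1 / (2p)` steps shows that `τ > n` with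
probability at least `1/2`, so `E[τ] ≥ 1 / (4p) = exp (1 / (2V)) / 8`. Taking logarithms,
`q(ε) log E[τ] ≥ 1 / (2σ²) - q(ε) log 8`, and the error term vanishes as `q(ε) → 0`.
-/

open MeasureTheory ProbabilityTheory Filter Real
open scoped ENNReal NNReal

lemma gaussianReal_real_abs_ge_le {v : ℝ≥0} {V a : ℝ} (hv : (v : ℝ) ≤ V) (hV : 0 < V)
    (ha : 0 ≤ a) :
    (gaussianReal 0 v).real {x | a ≤ |x|} ≤ 2 * exp (-a ^ 2 / (2 * V)) := by
  -- Chernoff at `t = ± a / V`, the optimal exponent for variance `V`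
  have hexp : exp (-(a / V) * a) * exp (0 * (a / V) + v * (a / V) ^ 2 / 2)
      ≤ exp (-a ^ 2 / (2 * V)) := by
    rw [← exp_add, exp_le_exp]
    have : (v : ℝ) * (a / V) ^ 2 ≤ V * (a / V) ^ 2 := by gcongr
    field_simp at this ⊢
    nlinarith
  have hright : (gaussianReal 0 v).real {x | a ≤ x} ≤ exp (-a ^ 2 / (2 * V)) := by
    refine (measure_ge_le_exp_mul_mgf (X := id) a (t := a / V) (by positivity)
      (integrable_exp_mul_gaussianReal _)).trans ?_
    rwa [mgf_id_gaussianReal]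
  have hleft : (gaussianReal 0 v).real {x | x ≤ -a} ≤ exp (-a ^ 2 / (2 * V)) := by
    have ht : -(a / V) ≤ 0 := neg_nonpos.mpr (by positivity)
    refine (measure_le_le_exp_mul_mgf (X := id) (-a) ht
      (integrable_exp_mul_gaussianReal _)).trans (Eq.trans_le ?_ hexp)
    simp only [mgf_id_gaussianReal, neg_sq, mul_neg, neg_neg, zero_mul, neg_mul, neg_zero]
  have hsub : {x : ℝ | a ≤ |x|} ⊆ {x | a ≤ x} ∪ {x | x ≤ -a} := fun x hx =>
    (le_abs'.mp (show a ≤ |x| from hx)).symm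
  calc (gaussianReal 0 v).real {x | a ≤ |x|}
      ≤ (gaussianReal 0 v).real ({x | a ≤ x} ∪ {x | x ≤ -a}) := measureReal_mono hsub
    _ ≤ _ := measureReal_union_le _ _
    _ ≤ 2 * exp (-a ^ 2 / (2 * V)) := by linarith

section FirstHit

variable {Ω : Type*} {S : ℕ → Set Ω}

noncomputable def firstHit (S : ℕ → Set Ω) (ω : Ω) : ℕ∞ :=
  sInf {s : ℕ∞ | ∃ t : ℕ, s = t ∧ 1 ≤ t ∧ ω ∈ S t}

lemma succ_le_firstHit {ω : Ω} {n : ℕ} (h : ∀ t ∈ Finset.Icc 1 n, ω ∉ S t) :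
    ((n + 1 : ℕ) : ℕ∞) ≤ firstHit S ω := by
  refine le_sInf ?_
  rintro s ⟨t, rfl, ht, hωt⟩
  have hnt : n < t := by
    by_contra! htn
    exact h t (Finset.mem_Icc.mpr ⟨ht, htn⟩) hωt
  exact_mod_cast hnt

variable [MeasurableSpace Ω] {μ : Measure Ω} [IsProbabilityMeasure μ]

lemma mul_one_sub_sum_le_lintegral_firstHit (hS : ∀ t, 1 ≤ t → NullMeasurableSet (S t) μ)
    (n : ℕ) :
    (n + 1 : ℝ≥0∞) * (1 - ∑ t ∈ Finset.Icc 1 n, μ (S t)) ≤ ∫⁻ ω, firstHit S ω ∂μ := by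
  set A := ⋂ t ∈ Finset.Icc 1 n, (S t)ᶜ
  have hA : NullMeasurableSet A μ :=
    Finset.nullMeasurableSet_biInter _ fun t ht => (hS t (Finset.mem_Icc.mp ht).1).compl
  have hAc : μ Aᶜ ≤ ∑ t ∈ Finset.Icc 1 n, μ (S t) := by
    simpa only [A, Set.compl_iInter, compl_compl] using measure_biUnion_finset_le _ _
  have hμA : 1 - ∑ t ∈ Finset.Icc 1 n, μ (S t) ≤ μ A := by
    rw [tsub_le_iff_right, ← measure_univ (μ := μ), ← Set.union_compl_self A]
    exact (measure_union_le _ _).trans (add_le_add_right hAc _)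
  have hind : A.indicator (fun _ => (n + 1 : ℝ≥0∞)) ≤ fun ω => (firstHit S ω : ℝ≥0∞) := by
    intro ω
    by_cases hω : ω ∈ A
    · rw [Set.indicator_of_mem hω]
      have := ENat.toENNReal_le.mpr (succ_le_firstHit (S := S) (Set.mem_iInter₂.mp hω))
      simpa using this
    · simp [hω]
  calc (n + 1 : ℝ≥0∞) * (1 - ∑ t ∈ Finset.Icc 1 n, μ (S t))
      ≤ (n + 1) * μ A := by gcongr
    _ = ∫⁻ ω, A.indicator (fun _ => (n + 1 : ℝ≥0∞)) ω ∂μ := (lintegral_indicator_const₀ hA _).symm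
    _ ≤ ∫⁻ ω, firstHit S ω ∂μ := lintegral_mono hind

lemma ofReal_inv_four_mul_le_lintegral_firstHit (hS : ∀ t, 1 ≤ t → NullMeasurableSet (S t) μ)
    {p : ℝ} (hp : 0 < p) (hSp : ∀ t, 1 ≤ t → μ (S t) ≤ ENNReal.ofReal p) :
    ENNReal.ofReal (1 / (4 * p)) ≤ ∫⁻ ω, firstHit S ω ∂μ := by
  -- run for `n ≈ 1 / (2 p)` steps, during which the union bound keeps the miss probability `≥ 1/2`
  set n := ⌊1 / (2 * p)⌋₊
  have hn : (n : ℝ) * p ≤ 1 / 2 := by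
    have := Nat.floor_le (a := 1 / (2 * p)) (by positivity)
    rw [le_div_iff₀ (by positivity)] at this
    linarith
  have hsum : ∑ t ∈ Finset.Icc 1 n, μ (S t) ≤ ENNReal.ofReal (1 / 2) :=
    calc ∑ t ∈ Finset.Icc 1 n, μ (S t)
        ≤ ∑ t ∈ Finset.Icc 1 n, ENNReal.ofReal p :=
          Finset.sum_le_sum fun t ht => hSp t (Finset.mem_Icc.mp ht).1
      _ = ENNReal.ofReal (n * p) := by
          rw [Finset.sum_const, Nat.card_Icc, nsmul_eq_mul, ENNReal.ofReal_mul (by positivity),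
            ENNReal.ofReal_natCast, add_tsub_cancel_right]
      _ ≤ ENNReal.ofReal (1 / 2) := ENNReal.ofReal_le_ofReal hn
  have hsucc : ENNReal.ofReal (1 / (2 * p)) ≤ n + 1 := by
    rw [← ENNReal.ofReal_natCast, ← ENNReal.ofReal_one,
      ← ENNReal.ofReal_add (by positivity) zero_le_one]
    exact ENNReal.ofReal_le_ofReal (Nat.lt_floor_add_one _).le
  calc ENNReal.ofReal (1 / (4 * p))
      = ENNReal.ofReal (1 / (2 * p)) * (1 - ENNReal.ofReal (1 / 2)) := by
        rw [← ENNReal.ofReal_one, ← ENNReal.ofReal_sub _ (by norm_num),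
          ← ENNReal.ofReal_mul (by positivity)]
        congr 1
        field_simp
        norm_num
    _ ≤ (n + 1) * (1 - ∑ t ∈ Finset.Icc 1 n, μ (S t)) := by gcongr
    _ ≤ ∫⁻ ω, firstHit S ω ∂μ := mul_one_sub_sum_le_lintegral_firstHit hS n

end FirstHit

lemma ofReal_exp_div_eight_le_lintegral_firstHit {Ω : Type*} [MeasurableSpace Ω] {μ : Measure Ω}
    [IsProbabilityMeasure μ] {X : ℕ → Ω → ℝ} {V : ℝ} (hV : 0 < V)
    (hX : ∀ t, 1 ≤ t → ∃ v : ℝ≥0, (v : ℝ) ≤ V ∧ μ.map (X t) = gaussianReal 0 v) :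
    ENNReal.ofReal (exp (1 / (2 * V)) / 8) ≤
      ∫⁻ ω, firstHit (fun t => {ω | 1 ≤ |X t ω|}) ω ∂μ := by
  have hmeas : MeasurableSet {x : ℝ | 1 ≤ |x|} := measurableSet_le measurable_const measurable_abs
  have haem : ∀ t, 1 ≤ t → AEMeasurable (X t) μ := fun t ht => by
    obtain ⟨v, -, hmap⟩ := hX t ht
    exact aemeasurable_of_map_neZero (by rw [hmap]; infer_instance)
  have htail : ∀ t, 1 ≤ t → μ {ω | 1 ≤ |X t ω|} ≤ ENNReal.ofReal (2 * exp (-1 ^ 2 / (2 * V))) := by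
    intro t ht
    obtain ⟨v, hvV, hmap⟩ := hX t ht
    change μ (X t ⁻¹' {x | 1 ≤ |x|}) ≤ _
    rw [← Measure.map_apply_of_aemeasurable (haem t ht) hmeas, hmap, ← ofReal_measureReal]
    exact ENNReal.ofReal_le_ofReal (gaussianReal_real_abs_ge_le hvV hV zero_le_one)
  have hp : 0 < 2 * exp (-1 ^ 2 / (2 * V)) := by positivity
  refine Eq.trans_le ?_ (ofReal_inv_four_mul_le_lintegral_firstHit
    (fun t ht => (haem t ht).nullMeasurableSet_preimage hmeas) hp htail)
  congr 1
  rw [neg_div, exp_neg]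
  field_simp
  norm_num

lemma coe_mul_log_le_mul_log {x y : ℝ} {E : ℝ≥0∞} (hx : 0 ≤ x) (hy : 0 < y)
    (h : ENNReal.ofReal y ≤ E) :
    ((x * Real.log y : ℝ) : EReal) ≤ (x : EReal) * ENNReal.log E := by
  rw [EReal.coe_mul, ← ENNReal.log_ofReal_of_pos hy]
  exact mul_le_mul_of_nonneg_left (ENNReal.log_monotone h) (EReal.coe_nonneg.mpr hx)

/-- If, for each `ε > 0`, `(Y ε t)_{t ≥ 1}` is a sequence of centered Gaussian real random
variables with variance at most `q ε * σ2` (`σ2 > 0`, `q ε → 0` as `ε → 0+`), and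
`τ ε = min {t ≥ 1 : |Y ε t| ≥ 1}`, then `liminf_{ε → 0} q ε * log E[τ ε] ≥ 1 / (2 * σ2)`. -/
theorem stmt4 {Ω : Type*} [MeasurableSpace Ω] (P : ℝ → Measure Ω)
    (hP : ∀ ε : ℝ, 0 < ε → IsProbabilityMeasure (P ε))
    (Y : ℝ → ℕ → Ω → ℝ) (σ2 : ℝ) (hσ2 : 0 < σ2)
    (q : ℝ → ℝ) (hq : ∀ ε : ℝ, 0 < ε → 0 < q ε)
    (hq0 : Filter.Tendsto q (nhdsWithin 0 (Set.Ioi 0)) (nhds 0))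
    (hY : ∀ ε : ℝ, 0 < ε → ∀ t : ℕ, 1 ≤ t →
      ∃ vt : NNReal, (vt : ℝ) ≤ q ε * σ2 ∧ (P ε).map (Y ε t) = gaussianReal 0 vt)
    (τ : ℝ → Ω → ℕ∞)
    (hτ : ∀ ε : ℝ, 0 < ε → ∀ ω,
      τ ε ω = sInf {s : ℕ∞ | ∃ t : ℕ, s = t ∧ 1 ≤ t ∧ 1 ≤ |Y ε t ω|}) :
    ((1 / (2 * σ2) : ℝ) : EReal) ≤
      Filter.liminf
        (fun ε : ℝ => ((q ε : ℝ) : EReal) * ENNReal.log (∫⁻ ω, (τ ε ω : ℝ≥0∞) ∂(P ε)))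
        (nhdsWithin 0 (Set.Ioi 0)) := by
  have hbound : ∀ᶠ ε in nhdsWithin 0 (Set.Ioi 0),
      ((1 / (2 * σ2) - q ε * Real.log 8 : ℝ) : EReal) ≤
        (q ε : EReal) * ENNReal.log (∫⁻ ω, (τ ε ω : ℝ≥0∞) ∂(P ε)) := by
    filter_upwards [self_mem_nhdsWithin] with ε (hε : 0 < ε)
    have := hP ε hε
    have hqε := hq ε hε
    have hτε : τ ε = firstHit (fun t => {ω | 1 ≤ |Y ε t ω|}) := funext (hτ ε hε)
    have h := coe_mul_log_le_mul_log hqε.le (by positivity) (hτε ▸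
      ofReal_exp_div_eight_le_lintegral_firstHit (by positivity) (hY ε hε))
    convert h using 2
    rw [Real.log_div (exp_ne_zero _) (by norm_num), Real.log_exp]
    field_simp
  have hlim : Tendsto (fun ε => ((1 / (2 * σ2) - q ε * Real.log 8 : ℝ) : EReal))
      (nhdsWithin 0 (Set.Ioi 0)) (nhds ((1 / (2 * σ2) : ℝ) : EReal)) := by
    refine EReal.tendsto_coe.mpr ?_
    simpa using tendsto_const_nhds.sub (hq0.mul_const (Real.log 8))
  exact hlim.liminf_eq.symm.trans_le (liminf_le_liminf hbound)
end

section
/- Let A be a real d×d matrix, c ∈ ℝ^d with c^T Σ_N c ≠ 0 where Σ_N = Σ_{i=0}^{N-1} A^i(A^T)^i. Then the infimum of (1/2)Σ_{t=1}^N ‖y_t - A y_{t-1}‖² over all sequences y_0 = 0, y_1, ..., y_N ∈ ℝ^d with |c^T y_N| ≥ 1 equals 1/(2 c^T Σ_N c), and it is attained by y_t = K Σ_t (A^{N-t})^T c with K = 1/|c^T Σ_N c|. -/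
open Matrix Finset

/-!
With `u t = y (t + 1) - A y t` and `y 0 = 0`, variation of constants gives
`c ⬝ y N = ∑ t < N, (A ^ (N - 1 - t))ᵀ c ⬝ u t`, while
`cᵀ Σ_N c = ∑ t < N, ‖(A ^ (N - 1 - t))ᵀ c‖²`. Cauchy–Schwarz therefore gives
`1 ≤ (c ⬝ y N)² ≤ (cᵀ Σ_N c) ∑ t < N, ‖u t‖²`. The trajectory `ystar` is
the equality case `u t = K (A ^ (N - 1 - t))ᵀ c`, by the recursion `Σ_{t+1} = A Σ_t Aᵀ + 1`.
-/

variable {n : Type*} [Fintype n]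

noncomputable def controlEnergy (A : Matrix n n ℝ) (y : ℕ → n → ℝ) (N : ℕ) : ℝ :=
  ∑ t ∈ range N, (y (t + 1) - A *ᵥ y t) ⬝ᵥ (y (t + 1) - A *ᵥ y t)

lemma sum_Icc_sum_sq_eq_controlEnergy (A : Matrix n n ℝ) (y : ℕ → n → ℝ) (N : ℕ) :
    ∑ t ∈ Icc 1 N, ∑ i, (y t i - (A *ᵥ y (t - 1)) i) ^ 2 = controlEnergy A y N := by
  induction N with
  | zero => simp [controlEnergy]
  | succ N ih =>
    rw [sum_Icc_succ_top (by omega), ih, controlEnergy, controlEnergy, sum_range_succ,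
      Nat.add_sub_cancel]
    simp only [dotProduct, Pi.sub_apply, sq]

lemma sq_sum_dotProduct_le {ι : Type*} (s : Finset ι) (u v : ι → n → ℝ) :
    (∑ t ∈ s, u t ⬝ᵥ v t) ^ 2 ≤ (∑ t ∈ s, u t ⬝ᵥ u t) * ∑ t ∈ s, v t ⬝ᵥ v t := by
  simpa only [dotProduct, sum_product, sq] using
    sum_mul_sq_le_sq_mul_sq (s ×ˢ univ) (fun p => u p.1 p.2) (fun p => v p.1 p.2)

variable [DecidableEq n]

noncomputable def controllabilityGramian (A : Matrix n n ℝ) (t : ℕ) : Matrix n n ℝ :=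
  ∑ i ∈ range t, A ^ i * Aᵀ ^ i

noncomputable def optimalTrajectory (A : Matrix n n ℝ) (c : n → ℝ) (N : ℕ) (K : ℝ) (t : ℕ) :
    n → ℝ :=
  K • controllabilityGramian A t *ᵥ ((A ^ (N - t))ᵀ *ᵥ c)

lemma controllabilityGramian_succ (A : Matrix n n ℝ) (t : ℕ) :
    controllabilityGramian A (t + 1) = A * controllabilityGramian A t * Aᵀ + 1 := by
  rw [controllabilityGramian, sum_range_succ', controllabilityGramian, mul_sum, sum_mul]
  simp only [pow_zero, mul_one]
  refine congrArg (· + 1) (sum_congr rfl fun i _ => ?_)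
  rw [pow_succ', pow_succ]
  simp only [mul_assoc]

lemma dotProduct_controllabilityGramian_mulVec (A : Matrix n n ℝ) (c : n → ℝ) (t : ℕ) :
    c ⬝ᵥ controllabilityGramian A t *ᵥ c =
      ∑ i ∈ range t, ((A ^ i)ᵀ *ᵥ c) ⬝ᵥ ((A ^ i)ᵀ *ᵥ c) := by
  simp only [controllabilityGramian, sum_mulVec, dotProduct_sum]
  refine sum_congr rfl fun i _ => ?_
  rw [← mulVec_mulVec, dotProduct_mulVec, ← mulVec_transpose, ← transpose_pow]

lemma dotProduct_controllabilityGramian_mulVec_nonneg (A : Matrix n n ℝ) (c : n → ℝ) (t : ℕ) :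
    0 ≤ c ⬝ᵥ controllabilityGramian A t *ᵥ c := by
  rw [dotProduct_controllabilityGramian_mulVec]
  exact sum_nonneg fun i _ => dotProduct_self_star_nonneg _

lemma eq_pow_mulVec_add_sum (A : Matrix n n ℝ) (y : ℕ → n → ℝ) (N : ℕ) :
    y N = A ^ N *ᵥ y 0 + ∑ t ∈ range N, A ^ (N - 1 - t) *ᵥ (y (t + 1) - A *ᵥ y t) := by
  induction N with
  | zero => simp
  | succ N ih =>
    have hshift : ∀ t ∈ range N, A *ᵥ (A ^ (N - 1 - t) *ᵥ (y (t + 1) - A *ᵥ y t)) =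
        A ^ (N - t) *ᵥ (y (t + 1) - A *ᵥ y t) := by
      intro t ht
      rw [mulVec_mulVec, ← pow_succ']
      congr 2
      have := mem_range.mp ht
      omega
    rw [sum_range_succ, Nat.add_sub_cancel, Nat.sub_self, pow_zero, one_mulVec,
      ← sum_congr rfl hshift, ← mulVec_sum, pow_succ', ← mulVec_mulVec, ← add_assoc,
      ← mulVec_add, ← ih]
    abel

lemma dotProduct_eq_sum_of_eq_zero (A : Matrix n n ℝ) (c : n → ℝ) {y : ℕ → n → ℝ}
    (hy : y 0 = 0) (N : ℕ) :
    c ⬝ᵥ y N = ∑ t ∈ range N, ((A ^ (N - 1 - t))ᵀ *ᵥ c) ⬝ᵥ (y (t + 1) - A *ᵥ y t) := by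
  rw [eq_pow_mulVec_add_sum A y N, hy, mulVec_zero, zero_add, dotProduct_sum]
  simp only [dotProduct_mulVec, mulVec_transpose]

lemma sq_dotProduct_le_mul_controlEnergy (A : Matrix n n ℝ) (c : n → ℝ) {y : ℕ → n → ℝ}
    (hy : y 0 = 0) (N : ℕ) :
    (c ⬝ᵥ y N) ^ 2 ≤ (c ⬝ᵥ controllabilityGramian A N *ᵥ c) * controlEnergy A y N := by
  rw [dotProduct_eq_sum_of_eq_zero A c hy, dotProduct_controllabilityGramian_mulVec,
    ← sum_range_reflect (fun i => ((A ^ i)ᵀ *ᵥ c) ⬝ᵥ ((A ^ i)ᵀ *ᵥ c)) N]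
  exact sq_sum_dotProduct_le _ _ _

lemma inv_le_controlEnergy (A : Matrix n n ℝ) (c : n → ℝ) {y : ℕ → n → ℝ} {N : ℕ}
    (hy0 : y 0 = 0) (hy1 : 1 ≤ |c ⬝ᵥ y N|) :
    (c ⬝ᵥ controllabilityGramian A N *ᵥ c)⁻¹ ≤ controlEnergy A y N := by
  have hprod : 1 ≤ (c ⬝ᵥ controllabilityGramian A N *ᵥ c) * controlEnergy A y N :=
    ((one_le_sq_iff_one_le_abs _).mpr hy1).trans (sq_dotProduct_le_mul_controlEnergy A c hy0 N)
  have hq : 0 < c ⬝ᵥ controllabilityGramian A N *ᵥ c := by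
    refine (dotProduct_controllabilityGramian_mulVec_nonneg A c N).lt_of_ne' fun h0 => ?_
    norm_num [h0] at hprod
  exact (inv_le_iff_one_le_mul₀' hq).mpr hprod

lemma optimalTrajectory_zero (A : Matrix n n ℝ) (c : n → ℝ) (N : ℕ) (K : ℝ) :
    optimalTrajectory A c N K 0 = 0 := by
  simp [optimalTrajectory, controllabilityGramian]

lemma dotProduct_optimalTrajectory (A : Matrix n n ℝ) (c : n → ℝ) (N : ℕ) (K : ℝ) :
    c ⬝ᵥ optimalTrajectory A c N K N = K * (c ⬝ᵥ controllabilityGramian A N *ᵥ c) := by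
  simp [optimalTrajectory]

lemma optimalTrajectory_succ_sub (A : Matrix n n ℝ) (c : n → ℝ) {N : ℕ} (K : ℝ) {t : ℕ}
    (ht : t < N) :
    optimalTrajectory A c N K (t + 1) - A *ᵥ optimalTrajectory A c N K t =
      K • (A ^ (N - 1 - t))ᵀ *ᵥ c := by
  have hpow : Aᵀ *ᵥ ((A ^ (N - (t + 1)))ᵀ *ᵥ c) = (A ^ (N - t))ᵀ *ᵥ c := by
    rw [mulVec_mulVec, ← transpose_mul, ← pow_succ]
    congr 3
    omega
  simp only [optimalTrajectory, controllabilityGramian_succ, add_mulVec, one_mulVec,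
    ← mulVec_mulVec, hpow, mulVec_smul, smul_add, Nat.sub_sub, Nat.add_comm 1 t]
  abel

lemma controlEnergy_optimalTrajectory (A : Matrix n n ℝ) (c : n → ℝ) (N : ℕ) (K : ℝ) :
    controlEnergy A (optimalTrajectory A c N K) N =
      K ^ 2 * (c ⬝ᵥ controllabilityGramian A N *ᵥ c) := by
  rw [controlEnergy, dotProduct_controllabilityGramian_mulVec,
    ← sum_range_reflect (fun i => ((A ^ i)ᵀ *ᵥ c) ⬝ᵥ ((A ^ i)ᵀ *ᵥ c)) N, mul_sum]
  refine sum_congr rfl fun t ht => ?_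
  rw [optimalTrajectory_succ_sub A c K (mem_range.mp ht), smul_dotProduct, dotProduct_smul]
  simp only [smul_eq_mul]
  ring

theorem stmt8_general {d : ℕ} (A : Matrix (Fin d) (Fin d) ℝ) (c : Fin d → ℝ)
    (N : ℕ)
    (S : ℕ → Matrix (Fin d) (Fin d) ℝ)
    (hS : ∀ t, S t = ∑ i ∈ Finset.range t, A ^ i * (Aᵀ) ^ i)
    (hc : c ⬝ᵥ (S N).mulVec c ≠ 0)
    (K : ℝ) (hK : K = 1 / |c ⬝ᵥ (S N).mulVec c|)
    (ystar : ℕ → Fin d → ℝ)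
    (hystar : ∀ t, ystar t = K • (S t).mulVec ((A ^ (N - t))ᵀ.mulVec c)) :
    sInf {r : ℝ | ∃ y : ℕ → Fin d → ℝ, y 0 = 0 ∧ 1 ≤ |c ⬝ᵥ y N| ∧
        r = (1 / 2) * ∑ t ∈ Finset.Icc 1 N, ∑ i, (y t i - A.mulVec (y (t - 1)) i) ^ 2} =
      1 / (2 * (c ⬝ᵥ (S N).mulVec c)) ∧
    ystar 0 = 0 ∧ 1 ≤ |c ⬝ᵥ ystar N| ∧
    (1 / 2) * ∑ t ∈ Finset.Icc 1 N, ∑ i, (ystar t i - A.mulVec (ystar (t - 1)) i) ^ 2 =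
      1 / (2 * (c ⬝ᵥ (S N).mulVec c)) := by
  obtain rfl : S = controllabilityGramian A := funext hS
  obtain rfl : ystar = optimalTrajectory A c N K := funext hystar
  simp only [sum_Icc_sum_sq_eq_controlEnergy]
  set q := c ⬝ᵥ controllabilityGramian A N *ᵥ c with hq_def
  have hq : 0 < q := (dotProduct_controllabilityGramian_mulVec_nonneg A c N).lt_of_ne' hc
  have hKq : K = q⁻¹ := by rw [hK, abs_of_pos hq, one_div]
  have hyN : c ⬝ᵥ optimalTrajectory A c N K N = 1 := by
    rw [dotProduct_optimalTrajectory, hKq]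
    exact inv_mul_cancel₀ hc
  have hcost : 1 / 2 * controlEnergy A (optimalTrajectory A c N K) N = 1 / (2 * q) := by
    rw [controlEnergy_optimalTrajectory, ← hq_def, hKq]
    field_simp
  have hleast : IsLeast {r : ℝ | ∃ y : ℕ → Fin d → ℝ, y 0 = 0 ∧ 1 ≤ |c ⬝ᵥ y N| ∧
      r = 1 / 2 * controlEnergy A y N} (1 / (2 * q)) := by
    refine ⟨⟨_, optimalTrajectory_zero A c N K, by simp [hyN], hcost.symm⟩, ?_⟩
    rintro r ⟨y, hy0, hy1, rfl⟩
    calc 1 / (2 * q) = 1 / 2 * q⁻¹ := by ring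
      _ ≤ 1 / 2 * controlEnergy A y N := by gcongr; exact inv_le_controlEnergy A c hy0 hy1
  exact ⟨hleast.csInf_eq, optimalTrajectory_zero A c N K, by simp [hyN], hcost⟩

/-- With `Σ t = ∑_{i=0}^{t-1} A^i (Aᵀ)^i` and `cᵀ Σ N c ≠ 0`, the infimum of
`(1/2) ∑_{t=1}^N ‖y t - A y (t-1)‖²` over sequences with `y 0 = 0` and `|cᵀ y N| ≥ 1`
equals `1 / (2 cᵀ Σ N c)`, and it is attained by `y t = K • Σ t (A^(N-t))ᵀ c` with
`K = 1 / |cᵀ Σ N c|`. -/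
theorem stmt8 {d : ℕ} (A : Matrix (Fin d) (Fin d) ℝ) (c : Fin d → ℝ)
    (N : ℕ) (hN : 1 ≤ N)
    (S : ℕ → Matrix (Fin d) (Fin d) ℝ)
    (hS : ∀ t, S t = ∑ i ∈ Finset.range t, A ^ i * (Aᵀ) ^ i)
    (hc : c ⬝ᵥ (S N).mulVec c ≠ 0)
    (K : ℝ) (hK : K = 1 / |c ⬝ᵥ (S N).mulVec c|)
    (ystar : ℕ → Fin d → ℝ)
    (hystar : ∀ t, ystar t = K • (S t).mulVec ((A ^ (N - t))ᵀ.mulVec c)) :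
    sInf {r : ℝ | ∃ y : ℕ → Fin d → ℝ, y 0 = 0 ∧ 1 ≤ |c ⬝ᵥ y N| ∧
        r = (1 / 2) * ∑ t ∈ Finset.Icc 1 N, ∑ i, (y t i - A.mulVec (y (t - 1)) i) ^ 2} =
      1 / (2 * (c ⬝ᵥ (S N).mulVec c)) ∧
    ystar 0 = 0 ∧ 1 ≤ |c ⬝ᵥ ystar N| ∧
    (1 / 2) * ∑ t ∈ Finset.Icc 1 N, ∑ i, (ystar t i - A.mulVec (ystar (t - 1)) i) ^ 2 =
      1 / (2 * (c ⬝ᵥ (S N).mulVec c)) :=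
  stmt8_general A c N S hS hc K hK ystar hystar
end
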